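/- arXiv:2503.05090 — 5 statements merged into one kernel-verified Lean document; each statement's English description precedes it below -/
import Mathlib

section
/- Let κ : [0,∞) → ℝ be a continuous nonpositive nonincreasing function, and let G : [0,∞) → ℝ be the unique solution of the Jacobi equation G'' + κ(t)·G = 0 with G(0) = 0, G'(0) = 1. Then G(t) ≥ t for all t ≥ 0. -/
/-!
Since `κ ≤ 0`, the equation gives `G'' = -κ G ≥ 0` wherever `G ≥ 0`. Starting from `G(0) = 0`,
`G'(0) = 1`, a continuous induction shows that `G ≥ 0` and `G' ≥ 1` propagate to the right:
near a point where they hold, `G' > 0` makes `G` increasing, hence nonnegative, hence `G'`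
increasing. Then `G - id` has nonnegative derivative, so `G(t) ≥ t`.
-/

open Set Filter Topology

theorem monotoneOn_Icc_of_hasDerivAt_nonneg {f f' : ℝ → ℝ} {a b : ℝ}
    (hf : ∀ x ∈ Icc a b, HasDerivAt f (f' x) x) (hf' : ∀ x ∈ Ioo a b, 0 ≤ f' x) :
    MonotoneOn f (Icc a b) :=
  monotoneOn_of_hasDerivWithinAt_nonneg (convex_Icc a b)
    (fun x hx => (hf x hx).continuousAt.continuousWithinAt)
    (fun x hx => by
      rw [interior_Icc] at hx ⊢
      exact (hf x (Ioo_subset_Icc_self hx)).hasDerivWithinAt)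
    (fun x hx => hf' x (by rwa [interior_Icc] at hx))

theorem eventually_le_of_jacobi {κ G G' : ℝ → ℝ} {a x : ℝ}
    (hκ : ∀ t ≥ a, κ t ≤ 0) (hG : ∀ t ≥ a, HasDerivAt G (G' t) t)
    (hG' : ∀ t ≥ a, HasDerivAt G' (-(κ t * G t)) t)
    (hx : a ≤ x) (hGx : 0 ≤ G x) (hG'x : 0 < G' x) :
    ∀ᶠ y in 𝓝[≥] x, G x ≤ G y ∧ G' x ≤ G' y := by
  obtain ⟨u, hxu, hpos⟩ := mem_nhdsGE_iff_exists_Icc_subset.1 <|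
    nhdsWithin_le_nhds ((hG' x hx).continuousAt.eventually (lt_mem_nhds hG'x))
  have hxI : x ∈ Icc x u := left_mem_Icc.2 hxu.le
  have hGmono : MonotoneOn G (Icc x u) :=
    monotoneOn_Icc_of_hasDerivAt_nonneg (fun y hy => hG y (hx.trans hy.1))
      fun y hy => (hpos (Ioo_subset_Icc_self hy)).le
  have hG'mono : MonotoneOn G' (Icc x u) :=
    monotoneOn_Icc_of_hasDerivAt_nonneg (fun y hy => hG' y (hx.trans hy.1)) fun y hy =>
      neg_nonneg.2 <| mul_nonpos_of_nonpos_of_nonneg (hκ y (hx.trans hy.1.le))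
        (hGx.trans (hGmono hxI (Ioo_subset_Icc_self hy) hy.1.le))
  filter_upwards [Icc_mem_nhdsGE hxu] with y hy
  exact ⟨hGmono hxI hy hy.1, hG'mono hxI hy hy.1⟩

theorem le_deriv_of_jacobi {κ G G' : ℝ → ℝ} {a : ℝ}
    (hκ : ∀ t ≥ a, κ t ≤ 0) (hG : ∀ t ≥ a, HasDerivAt G (G' t) t)
    (hG' : ∀ t ≥ a, HasDerivAt G' (-(κ t * G t)) t)
    (hGa : 0 ≤ G a) (hG'a : 0 < G' a) :
    ∀ t ≥ a, G' a ≤ G' t := by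
  intro b hb
  set s := {t | 0 ≤ G t ∧ G' a ≤ G' t}
  have hclosed : IsClosed (s ∩ Icc a b) := by
    have hGc : ContinuousOn G (Icc a b) := fun t ht =>
      (hG t ht.1).continuousAt.continuousWithinAt
    have hG'c : ContinuousOn G' (Icc a b) := fun t ht =>
      (hG' t ht.1).continuousAt.continuousWithinAt
    convert (hGc.preimage_isClosed_of_isClosed isClosed_Icc isClosed_Ici).inter
      (hG'c.preimage_isClosed_of_isClosed isClosed_Icc isClosed_Ici) using 1
    ext t
    simp only [s, mem_inter_iff, mem_ofPred_eq, mem_preimage, mem_Ici]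
    tauto
  suffices Icc a b ⊆ s from (this (right_mem_Icc.2 hb)).2
  refine hclosed.Icc_subset_of_forall_mem_nhdsWithin ⟨hGa, le_rfl⟩ fun x ⟨⟨hGx, hG'x⟩, hxI⟩ => ?_
  filter_upwards [nhdsWithin_mono x Ioi_subset_Ici_self
    (eventually_le_of_jacobi hκ hG hG' hxI.1 hGx (hG'a.trans_le hG'x))] with y hy
  exact ⟨hGx.trans hy.1, hG'x.trans hy.2⟩

theorem jacobi_lower_bound_general
    (κ G G' : ℝ → ℝ)
    (hκ0 : ∀ t ≥ (0:ℝ), κ t ≤ 0)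
    (hG' : ∀ t ≥ (0:ℝ), HasDerivAt G (G' t) t)
    (hG'' : ∀ t ≥ (0:ℝ), HasDerivAt G' (-(κ t * G t)) t)
    (hG0 : G 0 = 0) (hG'0 : G' 0 = 1) :
    ∀ t ≥ (0:ℝ), t ≤ G t := by
  intro t ht
  have hG'_ge : ∀ s ≥ (0:ℝ), 1 ≤ G' s := by
    simpa only [hG'0] using le_deriv_of_jacobi hκ0 hG' hG'' hG0.ge (hG'0 ▸ one_pos)
  have hmono : MonotoneOn (fun s => G s - s) (Icc 0 t) :=
    monotoneOn_Icc_of_hasDerivAt_nonneg (fun s hs => (hG' s hs.1).sub (hasDerivAt_id s))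
      fun s hs => sub_nonneg.2 (hG'_ge s hs.1.le)
  simpa [hG0] using hmono (left_mem_Icc.2 ht) (right_mem_Icc.2 ht) ht

/-- Lower comparison bound for the Jacobi equation `G'' + κ G = 0`, `G(0)=0`, `G'(0)=1`,
with `κ` continuous, nonpositive and nonincreasing: `G(t) ≥ t` for `t ≥ 0`. -/
theorem jacobi_lower_bound
    (κ G G' : ℝ → ℝ)
    (hκc : ContinuousOn κ (Set.Ici 0))
    (hκ0 : ∀ t ≥ (0:ℝ), κ t ≤ 0)
    (hκmono : AntitoneOn κ (Set.Ici 0))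
    (hG' : ∀ t ≥ (0:ℝ), HasDerivAt G (G' t) t)
    (hG'' : ∀ t ≥ (0:ℝ), HasDerivAt G' (-(κ t * G t)) t)
    (hG0 : G 0 = 0) (hG'0 : G' 0 = 1) :
    ∀ t ≥ (0:ℝ), t ≤ G t :=
  jacobi_lower_bound_general κ G G' hκ0 hG' hG'' hG0 hG'0
end

section
/- Let a ≥ 0 and let G, H : [0,∞) → ℝ solve G'' + p(t)G = 0 and H'' + q(t)H = 0 with G(0)=H(0)=0, G'(0)=H'(0)=1, where p, q are continuous with p(t) ≤ q(t) ≤ 0 on [0,a] and H > 0 on (0,a]. Then G(t) ≥ H(t) for all t ∈ [0,a]. -/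
open Set Filter Topology

private lemma slope_tendsto_aux {f : ℝ → ℝ} (hf : HasDerivAt f 1 0) (hf0 : f 0 = 0) :
    Filter.Tendsto (fun s => f s / s) (nhdsWithin 0 (Set.Ioi 0)) (nhds 1) := by
  have h := hasDerivAt_iff_tendsto_slope.mp hf
  have h2 := h.mono_left (nhdsWithin_mono 0 (fun x hx => Set.mem_compl_singleton_iff.mpr (ne_of_gt hx)))
  refine h2.congr fun s => ?_
  simp [slope_def_field, hf0]

/-- Sturm-type comparison: if `p ≤ q ≤ 0` on `[0,a]`, `G'' + pG = 0`, `H'' + qH = 0`,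
with the same initial data `G(0)=H(0)=0`, `G'(0)=H'(0)=1`, and `H > 0` on `(0,a]`,
then `G ≥ H` on `[0,a]`. -/
theorem sturm_comparison
    (a : ℝ) (ha : 0 ≤ a)
    (p q G G' H H' : ℝ → ℝ)
    (hpc : ContinuousOn p (Set.Icc 0 a))
    (hqc : ContinuousOn q (Set.Icc 0 a))
    (hpq : ∀ t ∈ Set.Icc (0:ℝ) a, p t ≤ q t)
    (hq0 : ∀ t ∈ Set.Icc (0:ℝ) a, q t ≤ 0)
    (hG' : ∀ t ∈ Set.Icc (0:ℝ) a, HasDerivAt G (G' t) t)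
    (hG'' : ∀ t ∈ Set.Icc (0:ℝ) a, HasDerivAt G' (-(p t * G t)) t)
    (hH' : ∀ t ∈ Set.Icc (0:ℝ) a, HasDerivAt H (H' t) t)
    (hH'' : ∀ t ∈ Set.Icc (0:ℝ) a, HasDerivAt H' (-(q t * H t)) t)
    (hG0 : G 0 = 0) (hH0 : H 0 = 0) (hG'0 : G' 0 = 1) (hH'0 : H' 0 = 1)
    (hHpos : ∀ t ∈ Set.Ioc (0:ℝ) a, 0 < H t) :
    ∀ t ∈ Set.Icc (0:ℝ) a, H t ≤ G t := by
  have h0a : (0:ℝ) ∈ Set.Icc (0:ℝ) a := ⟨le_rfl, ha⟩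
  have hGc : ContinuousOn G (Set.Icc 0 a) :=
    fun t ht => (hG' t ht).continuousAt.continuousWithinAt
  -- slope limits
  have hGslope := slope_tendsto_aux (hG'0 ▸ hG' 0 h0a) hG0
  have hHslope := slope_tendsto_aux (hH'0 ▸ hH' 0 h0a) hH0
  -- G positive near 0
  obtain ⟨δ, hδ0, hδ⟩ : ∃ δ > 0, ∀ s ∈ Set.Ioo (0:ℝ) δ, 0 < G s := by
    have h : ∀ᶠ s in nhdsWithin 0 (Set.Ioi 0), 0 < G s / s :=
      hGslope.eventually (eventually_gt_nhds one_pos)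
    rw [Filter.eventually_iff, mem_nhdsGT_iff_exists_Ioo_subset] at h
    obtain ⟨u, hu, hsub⟩ := h
    refine ⟨u, hu, fun s hs => ?_⟩
    have h1 := hsub hs
    have h2 : (0:ℝ) < s := hs.1
    have := mul_pos h1 h2
    rwa [div_mul_cancel₀ _ (ne_of_gt h2)] at this
  -- G positive on (0,a]
  have hGpos : ∀ t ∈ Set.Ioc (0:ℝ) a, 0 < G t := by
    by_contra hc
    push_neg at hc
    obtain ⟨t0, ht0, hGt0⟩ := hc
    set δ' := min δ t0 with hδ'def
    have hδ'0 : 0 < δ' := lt_min hδ0 ht0.1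
    have hδ'a : δ' ≤ a := le_trans (min_le_right _ _) ht0.2
    set Z := Set.Icc δ' a ∩ G ⁻¹' Set.Iic 0 with hZdef
    have hZc : IsClosed Z :=
      (hGc.mono (Set.Icc_subset_Icc hδ'0.le le_rfl)).preimage_isClosed_of_isClosed
        isClosed_Icc isClosed_Iic
    have hZne : Z.Nonempty := ⟨t0, ⟨min_le_right _ _, ht0.2⟩, hGt0⟩
    have hZbdd : BddBelow Z := ⟨δ', fun t ht => ht.1.1⟩
    set z := sInf Z with hzdef
    have hzZ := hZc.csInf_mem hZne hZbdd
    have hz0 : 0 < z := lt_of_lt_of_le hδ'0 hzZ.1.1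
    have hza : z ≤ a := hzZ.1.2
    have hGz : G z ≤ 0 := hzZ.2
    have hsubz : Set.Icc (0:ℝ) z ⊆ Set.Icc 0 a := Set.Icc_subset_Icc le_rfl hza
    -- G > 0 on (0, z)
    have hGmid : ∀ s ∈ Set.Ioo (0:ℝ) z, 0 < G s := by
      intro s hs
      by_cases hsd : s < δ'
      · exact hδ s ⟨hs.1, lt_of_lt_of_le hsd (min_le_left _ _)⟩
      · push_neg at hsd
        by_contra hneg
        push_neg at hneg
        have : s ∈ Z := ⟨⟨hsd, le_trans hs.2.le hza⟩, hneg⟩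
        exact absurd (csInf_le hZbdd this) (not_le.mpr hs.2)
    -- G z = 0 by continuity from the left
    have hGz0 : G z = 0 := by
      refine le_antisymm hGz ?_
      have hct : Filter.Tendsto G (nhdsWithin z (Set.Iio z)) (nhds (G z)) :=
        (hG' z (hsubz ⟨hz0.le, le_rfl⟩)).continuousAt.continuousWithinAt
      refine ge_of_tendsto hct ?_
      filter_upwards [Ioo_mem_nhdsLT_of_mem (Set.mem_Ioc.mpr ⟨hz0, le_rfl⟩)] with s hs
      exact (hGmid s hs).le
    have hGnnz : ∀ s ∈ Set.Icc (0:ℝ) z, 0 ≤ G s := by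
      intro s hs
      rcases eq_or_lt_of_le hs.1 with h0 | h0
      · rw [← h0, hG0]
      rcases eq_or_lt_of_le hs.2 with h1 | h1
      · rw [h1, hGz0]
      · exact (hGmid s ⟨h0, h1⟩).le
    -- G' is monotone on [0,z]
    have hG'mono : MonotoneOn G' (Set.Icc 0 z) := by
      refine monotoneOn_of_deriv_nonneg (convex_Icc _ _)
        (fun s hs => (hG'' s (hsubz hs)).continuousAt.continuousWithinAt)
        (fun s hs => (hG'' s (hsubz (interior_subset hs))).differentiableAt.differentiableWithinAt)
        (fun s hs => ?_)
      have hsI : s ∈ Set.Icc 0 z := interior_subset hs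
      rw [(hG'' s (hsubz hsI)).deriv]
      have h1 := hpq s (hsubz hsI)
      have h2 := hq0 s (hsubz hsI)
      have h3 := hGnnz s hsI
      nlinarith
    -- G strictly increasing on [0,z]
    have hGsm : StrictMonoOn G (Set.Icc 0 z) := by
      refine strictMonoOn_of_deriv_pos (convex_Icc _ _) (hGc.mono hsubz) (fun s hs => ?_)
      have hsI : s ∈ Set.Icc 0 z := interior_subset hs
      rw [(hG' s (hsubz hsI)).deriv]
      have := hG'mono (Set.left_mem_Icc.mpr hz0.le) hsI hsI.1
      rw [hG'0] at this
      linarith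
    have := hGsm (Set.left_mem_Icc.mpr hz0.le) (Set.right_mem_Icc.mpr hz0.le) hz0
    rw [hG0, hGz0] at this
    exact lt_irrefl 0 this
  have hGnn : ∀ t ∈ Set.Icc (0:ℝ) a, 0 ≤ G t := by
    intro t ht
    rcases eq_or_lt_of_le ht.1 with h0 | h0
    · rw [← h0, hG0]
    · exact (hGpos t ⟨h0, ht.2⟩).le
  have hHnn : ∀ t ∈ Set.Icc (0:ℝ) a, 0 ≤ H t := by
    intro t ht
    rcases eq_or_lt_of_le ht.1 with h0 | h0
    · rw [← h0, hH0]
    · exact (hHpos t ⟨h0, ht.2⟩).le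
  -- Wronskian
  set W : ℝ → ℝ := fun t => G' t * H t - G t * H' t with hWdef
  have hWd : ∀ t ∈ Set.Icc (0:ℝ) a, HasDerivAt W ((q t - p t) * (G t * H t)) t := by
    intro t ht
    have h1 := ((hG'' t ht).mul (hH' t ht)).sub ((hG' t ht).mul (hH'' t ht))
    exact h1.congr_deriv (by ring)
  have hWmono : MonotoneOn W (Set.Icc 0 a) := by
    refine monotoneOn_of_deriv_nonneg (convex_Icc _ _)
      (fun t ht => (hWd t ht).continuousAt.continuousWithinAt)
      (fun t ht => (hWd t (interior_subset ht)).differentiableAt.differentiableWithinAt)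
      (fun t ht => ?_)
    have htI : t ∈ Set.Icc 0 a := interior_subset ht
    rw [(hWd t htI).deriv]
    exact mul_nonneg (sub_nonneg.mpr (hpq t htI)) (mul_nonneg (hGnn t htI) (hHnn t htI))
  have hWnn : ∀ t ∈ Set.Icc (0:ℝ) a, 0 ≤ W t := by
    intro t ht
    have h := hWmono h0a ht ht.1
    have hW0 : W 0 = 0 := by simp [hWdef, hG0, hH0]
    linarith
  -- conclusion
  intro t ht
  rcases eq_or_lt_of_le ht.1 with h0 | h0
  · rw [← h0, hG0, hH0]
  have htIoc : t ∈ Set.Ioc (0:ℝ) a := ⟨h0, ht.2⟩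
  have hHt := hHpos t htIoc
  rw [← one_le_div hHt]
  have key : ∀ s ∈ Set.Ioc (0:ℝ) t, G s / H s ≤ G t / H t := by
    intro s hs
    have hst : Set.Icc s t ⊆ Set.Ioc 0 a :=
      fun x hx => ⟨lt_of_lt_of_le hs.1 hx.1, le_trans hx.2 ht.2⟩
    have hder : ∀ x ∈ Set.Icc s t, HasDerivAt (fun y => G y / H y) (W x / H x ^ 2) x := by
      intro x hx
      have hxI : x ∈ Set.Icc 0 a := ⟨(hst hx).1.le, (hst hx).2⟩
      exact (hG' x hxI).div (hH' x hxI) (ne_of_gt (hHpos x (hst hx)))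
    have hmono : MonotoneOn (fun y => G y / H y) (Set.Icc s t) := by
      refine monotoneOn_of_deriv_nonneg (convex_Icc _ _)
        (fun x hx => (hder x hx).continuousAt.continuousWithinAt)
        (fun x hx => (hder x (interior_subset hx)).differentiableAt.differentiableWithinAt)
        (fun x hx => ?_)
      have hxI : x ∈ Set.Icc s t := interior_subset hx
      rw [(hder x hxI).deriv]
      exact div_nonneg (hWnn x ⟨(hst hxI).1.le, (hst hxI).2⟩) (sq_nonneg _)
    exact hmono (Set.left_mem_Icc.mpr hs.2) (Set.right_mem_Icc.mpr hs.2) hs.2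
  have hratio : Filter.Tendsto (fun s => G s / H s) (nhdsWithin 0 (Set.Ioi 0)) (nhds 1) := by
    have h := hGslope.div hHslope one_ne_zero
    rw [div_one] at h
    refine h.congr' ?_
    filter_upwards [Ioo_mem_nhdsGT_of_mem (Set.mem_Ico.mpr ⟨le_rfl, h0⟩)] with s hs
    have hs0 : s ≠ 0 := ne_of_gt hs.1
    have hHs : H s ≠ 0 := ne_of_gt (hHpos s ⟨hs.1, le_trans hs.2.le ht.2⟩)
    rw [Pi.div_apply]
    field_simp
  refine le_of_tendsto hratio ?_
  filter_upwards [Ioo_mem_nhdsGT_of_mem (Set.mem_Ico.mpr ⟨le_rfl, h0⟩)] with s hs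
  exact key s ⟨hs.1, hs.2.le⟩
end

section
/- (Borel's growth lemma) Let u : (r₀, ∞) → ℝ be a nonnegative nondecreasing function, with r₀ ≥ 0. Then for every δ > 0 there exists a measurable set E_δ ⊂ (r₀, ∞) of finite Lebesgue measure such that for almost every r ∈ (r₀,∞) \ E_δ at which u is differentiable, u'(r) ≤ u(r)^(1+δ). -/
open MeasureTheory Set Filter

/-- Borel's growth lemma: if `u ≥ 0` is nondecreasing on `(r₀,∞)`, then for every `δ > 0`
there is a measurable set `E_δ ⊆ (r₀,∞)` of finite Lebesgue measure outside of which
`u'(r) ≤ u(r)^(1+δ)` at every point of differentiability. -/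
theorem borel_growth_lemma
    (r₀ : ℝ) (hr₀ : 0 ≤ r₀) (u : ℝ → ℝ)
    (hnn : ∀ r ∈ Set.Ioi r₀, 0 ≤ u r)
    (hmono : MonotoneOn u (Set.Ioi r₀)) :
    ∀ δ > (0:ℝ), ∃ E ⊆ Set.Ioi r₀, MeasurableSet E ∧ volume E < ⊤ ∧
      ∀ᵐ r ∂volume, r ∈ Set.Ioi r₀ \ E → DifferentiableAt ℝ u r →
        deriv u r ≤ u r ^ (1 + δ) := by
  intro δ hδ
  by_cases hz : ∃ r₁ ∈ Set.Ioi r₀, 0 < u r₁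
  · -- main case : u is somewhere positive
    obtain ⟨r₁, hr₁, hc⟩ := hz
    set c := u r₁ with hc_def
    set w : ℝ → ℝ := fun x => u (max x r₁) with hw_def
    have hmem : ∀ x : ℝ, max x r₁ ∈ Set.Ioi r₀ := fun x =>
      Set.mem_Ioi.2 (lt_of_lt_of_le (Set.mem_Ioi.1 hr₁) (le_max_right _ _))
    have hwmono : Monotone w := fun x y hxy =>
      hmono (hmem x) (hmem y) (max_le_max hxy le_rfl)
    have hwc : ∀ x, c ≤ w x := fun x => hmono hr₁ (hmem x) (le_max_right _ _)
    have hwpos : ∀ x, 0 < w x := fun x => lt_of_lt_of_le hc (hwc x)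
    -- the bad set
    set B : Set ℝ :=
      {r | DifferentiableAt ℝ w r ∧ w r ^ (1 + δ) < deriv w r} ∩ Set.Ioi r₁ with hB_def
    have hBmeas : MeasurableSet B := by
      refine MeasurableSet.inter ?_ measurableSet_Ioi
      have h1 : MeasurableSet {r | DifferentiableAt ℝ w r} :=
        measurableSet_of_differentiableAt ℝ w
      have h2 : MeasurableSet {r | w r ^ (1 + δ) < deriv w r} :=
        measurableSet_lt
          (((Real.continuous_rpow_const (by positivity : (0:ℝ) ≤ 1 + δ)).measurable).comp
            hwmono.measurable) (measurable_deriv w)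
      exact h1.inter h2
    -- the auxiliary function v = -(1/δ) w^(-δ)
    set v : ℝ → ℝ := fun x => -(1/δ) * w x ^ (-δ) with hv_def
    have hvmono : Monotone v := by
      intro x y hxy
      have h1 : w y ^ (-δ) ≤ w x ^ (-δ) :=
        Real.rpow_le_rpow_of_nonpos (hwpos x) (hwmono hxy) (by linarith)
      have h2 : -(1/δ) ≤ 0 := neg_nonpos.2 (by positivity)
      exact mul_le_mul_of_nonpos_left h1 h2
    have hvle : ∀ x, v x ≤ 0 := by
      intro x
      have h1 : 0 ≤ w x ^ (-δ) := Real.rpow_nonneg (hwpos x).le _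
      have h2 : -(1/δ) ≤ 0 := neg_nonpos.2 (by positivity)
      exact mul_nonpos_of_nonpos_of_nonneg h2 h1
    set K : ℝ := (1/δ) * c ^ (-δ) with hK_def
    have hvge : ∀ x, -K ≤ v x := by
      intro x
      have h1 : w x ^ (-δ) ≤ c ^ (-δ) :=
        Real.rpow_le_rpow_of_nonpos hc (hwc x) (by linarith)
      have h2 : (1/δ) * w x ^ (-δ) ≤ (1/δ) * c ^ (-δ) :=
        mul_le_mul_of_nonneg_left h1 (by positivity)
      have h3 : v x = -((1/δ) * w x ^ (-δ)) := by simp [hv_def]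
      rw [h3, hK_def]
      linarith
    -- chain rule : on B, v has derivative > 1
    have hchain : ∀ r, DifferentiableAt ℝ w r →
        HasDerivAt v (w r ^ (-δ - 1) * deriv w r) r := by
      intro r hd
      have h1 : HasDerivAt (fun t : ℝ => t ^ (-δ)) (-δ * w r ^ (-δ - 1)) (w r) :=
        Real.hasDerivAt_rpow_const (Or.inl (hwpos r).ne')
      have h2 : HasDerivAt (fun x => w x ^ (-δ)) (-δ * w r ^ (-δ - 1) * deriv w r) r :=
        h1.comp r hd.hasDerivAt
      have h3 := h2.const_mul (-(1/δ))
      refine h3.congr_deriv ?_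
      rw [show -(1/δ) * (-δ * w r ^ (-δ - 1) * deriv w r) = (1/δ * δ) * (w r ^ (-δ - 1) * deriv w r) by ring, one_div_mul_cancel hδ.ne']
      ring
    have hderiv_gt : ∀ r ∈ B, 1 < w r ^ (-δ - 1) * deriv w r := by
      intro r hr
      obtain ⟨⟨hd, hlt⟩, _⟩ := hr
      have hpos : 0 < w r ^ (-δ - 1) := Real.rpow_pos_of_pos (hwpos r) _
      have h1 : w r ^ (-δ - 1) * w r ^ (1 + δ) < w r ^ (-δ - 1) * deriv w r :=
        mul_lt_mul_of_pos_left hlt hpos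
      have h2 : w r ^ (-δ - 1) * w r ^ (1 + δ) = 1 := by
        rw [← Real.rpow_add (hwpos r), show -δ - 1 + (1 + δ) = 0 by ring, Real.rpow_zero]
      linarith
    -- the Stieltjes measure of v
    set F := hvmono.stieltjesFunction with hF_def
    set μ := F.measure with hμ_def
    have hF_eq : ∀ x, F x = Function.rightLim v x := fun x => hvmono.stieltjesFunction_eq x
    -- μ (Ioi r₁) ≤ ofReal K
    have hμIoi : μ (Set.Ioi r₁) ≤ ENNReal.ofReal K := by
      have hunion : Set.Ioi r₁ = ⋃ n : ℕ, Set.Ioc r₁ (r₁ + (n + 1)) := by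
        ext x
        simp only [Set.mem_iUnion, Set.mem_Ioc, Set.mem_Ioi]
        constructor
        · intro hx
          obtain ⟨n, hn⟩ := exists_nat_ge (x - r₁)
          exact ⟨n, hx, by push_cast; linarith⟩
        · rintro ⟨n, h, _⟩; exact h
      rw [hunion]
      have hdir : Directed (· ⊆ ·) (fun n : ℕ => Set.Ioc r₁ (r₁ + (n + 1))) := by
        apply Monotone.directed_le
        intro m n hmn
        apply Set.Ioc_subset_Ioc le_rfl
        have : (m : ℝ) ≤ n := Nat.cast_le.2 hmn
        linarith
      rw [hdir.measure_iUnion]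
      refine iSup_le fun n => ?_
      rw [StieltjesFunction.measure_Ioc]
      apply ENNReal.ofReal_le_ofReal
      have h1 : F (r₁ + (n + 1)) ≤ v (r₁ + (n + 1) + 1) := by
        rw [hF_eq]; exact hvmono.rightLim_le (by linarith)
      have h2 : v r₁ ≤ F r₁ := by
        rw [hF_eq]; exact hvmono.le_rightLim le_rfl
      have h3 := hvle (r₁ + (n + 1) + 1)
      have h4 := hvge r₁
      linarith
    -- volume B ≤ μ B
    have hae := hvmono.ae_hasDerivAt
    have key : ∀ᵐ x ∂volume, x ∈ B → 1 ≤ μ.rnDeriv volume x := by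
      filter_upwards [hae] with x hx hxB
      have hd : DifferentiableAt ℝ w x := hxB.1.1
      have hD := hchain x hd
      have heq : (μ.rnDeriv volume x).toReal = w x ^ (-δ - 1) * deriv w x :=
        hx.unique hD
      have h1 : 1 < (μ.rnDeriv volume x).toReal := by
        rw [heq]; exact hderiv_gt x hxB
      by_cases htop : μ.rnDeriv volume x = ⊤
      · simp [htop]
      · calc (1 : ENNReal) = ENNReal.ofReal 1 := by simp
          _ ≤ ENNReal.ofReal (μ.rnDeriv volume x).toReal := ENNReal.ofReal_le_ofReal h1.le
          _ = μ.rnDeriv volume x := ENNReal.ofReal_toReal htop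
    have hvolB : volume B ≤ ENNReal.ofReal K := by
      calc volume B = ∫⁻ _ in B, 1 ∂volume := (setLIntegral_one B).symm
        _ ≤ ∫⁻ x in B, μ.rnDeriv volume x ∂volume :=
            lintegral_mono_ae ((ae_restrict_iff' hBmeas).2 key)
        _ ≤ μ B := Measure.setLIntegral_rnDeriv_le B
        _ ≤ μ (Set.Ioi r₁) := measure_mono Set.inter_subset_right
        _ ≤ ENNReal.ofReal K := hμIoi
    -- assemble E
    refine ⟨Set.Ioc r₀ r₁ ∪ B, ?_, ?_, ?_, ?_⟩
    · apply Set.union_subset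
      · exact Set.Ioc_subset_Ioi_self
      · exact Set.inter_subset_right.trans (Set.Ioi_subset_Ioi hr₁.le)
    · exact measurableSet_Ioc.union hBmeas
    · calc volume (Set.Ioc r₀ r₁ ∪ B) ≤ volume (Set.Ioc r₀ r₁) + volume B :=
            measure_union_le _ _
        _ ≤ ENNReal.ofReal (r₁ - r₀) + ENNReal.ofReal K := by
            rw [Real.volume_Ioc]; exact add_le_add le_rfl hvolB
        _ < ⊤ := by finiteness
    · refine ae_of_all _ fun r hr hd => ?_
      obtain ⟨hrIoi, hrE⟩ := hr
      have hr₁lt : r₁ < r := by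
        by_contra h
        push_neg at h
        exact hrE (Or.inl ⟨hrIoi, h⟩)
      have hrB : r ∉ B := fun h => hrE (Or.inr h)
      -- u = w near r
      have hev : u =ᶠ[nhds r] w := by
        filter_upwards [Ioi_mem_nhds hr₁lt] with x hx
        simp only [hw_def, max_eq_left (le_of_lt (Set.mem_Ioi.1 hx))]
      have hdw : DifferentiableAt ℝ w r := hd.congr_of_eventuallyEq hev.symm
      have hne : ¬ (w r ^ (1 + δ) < deriv w r) := fun h => hrB ⟨⟨hdw, h⟩, hr₁lt⟩
      have heq1 : deriv u r = deriv w r := hev.deriv_eq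
      have heq2 : u r = w r := by simp [hw_def, max_eq_left hr₁lt.le]
      rw [heq1, heq2]
      exact not_lt.1 hne
  · -- degenerate case : u ≡ 0 on (r₀, ∞)
    refine ⟨∅, Set.empty_subset _, MeasurableSet.empty, by simp, ae_of_all _ ?_⟩
    intro r hr hd
    have hr' : r ∈ Set.Ioi r₀ := hr.1
    have hu0 : ∀ x ∈ Set.Ioi r₀, u x = 0 := fun x hx =>
      le_antisymm (not_lt.1 fun h => hz ⟨x, hx, h⟩) (hnn x hx)
    have hev : u =ᶠ[nhds r] fun _ => (0 : ℝ) := by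
      filter_upwards [Ioi_mem_nhds hr'] with x hx using hu0 x hx
    have hderiv : deriv u r = 0 := by rw [hev.deriv_eq, deriv_const]
    rw [hderiv, hu0 r hr', Real.zero_rpow (by positivity)]
end

section
/- Let κ < 0 and m ≥ 1 an integer, and set χ(t) = sinh(√(−κ)·t)/√(−κ). Then there exists a constant C > 0 such that for all r > 0, ∫_0^r χ(t)^{2m−1} · (∫_t^r χ(s)^{1−2m} ds) dt ≤ C·r. -/
open Real MeasureTheory intervalIntegral

set_option maxHeartbeats 1000000 in

/-- For `κ < 0`, `m ≥ 1` and `χ(t) = sinh(√(−κ)t)/√(−κ)`, there is a constant `C > 0` with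
`∫_0^r χ^{2m−1}(t) (∫_t^r χ^{1−2m}(s) ds) dt ≤ C r` for all `r > 0`. -/
theorem chi_double_integral_linear_bound
    (κ : ℝ) (hκ : κ < 0) (m : ℕ) (hm : 1 ≤ m) :
    ∃ C > (0:ℝ), ∀ r > (0:ℝ),
      (∫ t in (0:ℝ)..r,
        (Real.sinh (Real.sqrt (-κ) * t) / Real.sqrt (-κ)) ^ (2 * (m:ℤ) - 1) *
          (∫ s in t..r,
            (Real.sinh (Real.sqrt (-κ) * s) / Real.sqrt (-κ)) ^ (1 - 2 * (m:ℤ))))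
        ≤ C * r := by
  set A := Real.sqrt (-κ) with hAdef
  have hA : 0 < A := Real.sqrt_pos.2 (by linarith)
  set n : ℕ := 2 * m - 1 with hn
  have hn1 : 1 ≤ n := by omega
  have hz : (2 * (m:ℤ) - 1) = (n : ℤ) := by simp [hn]; omega
  have hz' : (1 - 2 * (m:ℤ)) = -(n : ℤ) := by simp [hn]; omega
  set χ : ℝ → ℝ := fun t => Real.sinh (A * t) / A with hχ
  have hχcont : Continuous χ := by
    exact (Real.continuous_sinh.comp (continuous_const.mul continuous_id)).div_const A
  have hχpos : ∀ t : ℝ, 0 < t → 0 < χ t := fun t ht =>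
    div_pos (Real.sinh_pos_iff.2 (mul_pos hA ht)) hA
  -- growth: χ s ≥ χ t * exp (A*(s-t)) for 0 < t ≤ s
  have hgrow : ∀ t s : ℝ, 0 < t → t ≤ s → χ t * Real.exp (A * (s - t)) ≤ χ s := by
    intro t s ht hts
    have h1 : Real.sinh (A * t) * Real.exp (A * (s - t)) ≤ Real.sinh (A * s) := by
      have : A * s = A * t + A * (s - t) := by ring
      rw [this, Real.sinh_add]
      have hst : 0 ≤ Real.sinh (A * (s - t)) := Real.sinh_nonneg_iff.2 (by nlinarith)
      have hct : Real.sinh (A * t) ≤ Real.cosh (A * t) := (Real.sinh_lt_cosh _).le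
      have hsp : 0 < Real.sinh (A * t) := Real.sinh_pos_iff.2 (mul_pos hA ht)
      rw [← Real.cosh_add_sinh]
      nlinarith
    calc χ t * Real.exp (A * (s - t)) = Real.sinh (A * t) * Real.exp (A * (s - t)) / A := by
          ring
      _ ≤ Real.sinh (A * s) / A := by gcongr
      _ = χ s := rfl
  refine ⟨1 / A, by positivity, fun r hr => ?_⟩
  -- pointwise bound on the outer integrand for t ∈ Ioc 0 r
  have key : ∀ t ∈ Set.Ioc (0:ℝ) r,
      χ t ^ n * (∫ s in t..r, (χ s ^ n)⁻¹) ≤ 1 / A := by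
    intro t ht
    obtain ⟨ht0, htr⟩ := ht
    have hχt : 0 < χ t := hχpos t ht0
    -- inner pointwise bound
    have hpt : ∀ s ∈ Set.Icc t r,
        (χ s ^ n)⁻¹ ≤ (χ t ^ n)⁻¹ * Real.exp (A * t) * Real.exp (-(A * s)) := by
      intro s hs
      have hts : t ≤ s := hs.1
      have hχs : 0 < χ s := hχpos s (lt_of_lt_of_le ht0 hts)
      have hE : 1 ≤ Real.exp (A * (s - t)) := Real.one_le_exp (by nlinarith)
      have h2 : χ t ^ n * Real.exp (A * (s - t)) ≤ χ s ^ n := by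
        calc χ t ^ n * Real.exp (A * (s - t))
            ≤ χ t ^ n * Real.exp (A * (s - t)) ^ n := by
              have := pow_le_pow_right₀ hE hn1
              nlinarith [pow_pos hχt n, this, pow_le_pow_right₀ hE hn1]
          _ = (χ t * Real.exp (A * (s - t))) ^ n := by rw [mul_pow]
          _ ≤ χ s ^ n := by
              apply pow_le_pow_left₀ (mul_nonneg hχt.le (Real.exp_pos _).le) (hgrow t s ht0 hts)
      have h3 : 0 < χ t ^ n * Real.exp (A * (s - t)) :=
        mul_pos (pow_pos hχt n) (Real.exp_pos _)
      have h4 := inv_anti₀ h3 h2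
      calc (χ s ^ n)⁻¹ ≤ (χ t ^ n * Real.exp (A * (s - t)))⁻¹ := h4
        _ = (χ t ^ n)⁻¹ * Real.exp (A * t) * Real.exp (-(A * s)) := by
            rw [mul_inv, ← Real.exp_neg, mul_assoc, ← Real.exp_add]
            ring_nf
    -- integrability
    have hcont1 : ContinuousOn (fun s => (χ s ^ n)⁻¹) (Set.Icc t r) := by
      apply ContinuousOn.inv₀ ((hχcont.pow n).continuousOn)
      intro s hs
      exact pow_ne_zero n (hχpos s (lt_of_lt_of_le ht0 hs.1)).ne'
    have hint1 : IntervalIntegrable (fun s => (χ s ^ n)⁻¹) volume t r := by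
      apply ContinuousOn.intervalIntegrable
      rwa [Set.uIcc_of_le htr]
    have hint2 : IntervalIntegrable
        (fun s => (χ t ^ n)⁻¹ * Real.exp (A * t) * Real.exp (-(A * s))) volume t r :=
      (Continuous.intervalIntegrable (by continuity) t r)
    have hmono : (∫ s in t..r, (χ s ^ n)⁻¹)
        ≤ ∫ s in t..r, (χ t ^ n)⁻¹ * Real.exp (A * t) * Real.exp (-(A * s)) := by
      apply intervalIntegral.integral_mono_on htr hint1 hint2 hpt
    -- compute the exp integral
    have hexp : (∫ s in t..r, Real.exp (-(A * s)))
        = -(Real.exp (-(A * r))) / A - (-(Real.exp (-(A * t))) / A) := by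
      apply intervalIntegral.integral_eq_sub_of_hasDerivAt
      · intro s hs
        have h : HasDerivAt (fun s : ℝ => -(A * s)) (-A) s := by
          simpa [Pi.neg_def] using ((hasDerivAt_id s).const_mul A).neg
        have h2 := h.exp
        have h3 := (h2.div_const A).neg
        convert h3 using 1
        · ext x; rw [neg_div]; rfl
        · rw [mul_neg, neg_div, neg_neg, mul_div_assoc, div_self hA.ne', mul_one]
      · exact (Continuous.intervalIntegrable (by continuity) t r)
    have hexple : (∫ s in t..r, Real.exp (-(A * s))) ≤ Real.exp (-(A * t)) / A := by
      rw [hexp]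
      have h1 := Real.exp_pos (-(A * r))
      have h2 : -Real.exp (-(A * r)) / A - -Real.exp (-(A * t)) / A
          = (Real.exp (-(A * t)) - Real.exp (-(A * r))) / A := by ring
      rw [h2]
      gcongr
      linarith
    have hinner : (∫ s in t..r, (χ s ^ n)⁻¹) ≤ (χ t ^ n)⁻¹ * Real.exp (A * t) *
        (Real.exp (-(A * t)) / A) := by
      calc (∫ s in t..r, (χ s ^ n)⁻¹)
          ≤ ∫ s in t..r, (χ t ^ n)⁻¹ * Real.exp (A * t) * Real.exp (-(A * s)) := hmono
        _ = (χ t ^ n)⁻¹ * Real.exp (A * t) * (∫ s in t..r, Real.exp (-(A * s))) := by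
            rw [← intervalIntegral.integral_const_mul]
        _ ≤ (χ t ^ n)⁻¹ * Real.exp (A * t) * (Real.exp (-(A * t)) / A) := by
            apply mul_le_mul_of_nonneg_left hexple
              (mul_nonneg (inv_nonneg.2 (pow_pos hχt n).le) (Real.exp_pos _).le)
    calc χ t ^ n * (∫ s in t..r, (χ s ^ n)⁻¹)
        ≤ χ t ^ n * ((χ t ^ n)⁻¹ * Real.exp (A * t) * (Real.exp (-(A * t)) / A)) := by
          apply mul_le_mul_of_nonneg_left hinner (pow_pos hχt n).le
      _ = χ t ^ n * (χ t ^ n)⁻¹ * (Real.exp (A * t) * Real.exp (-(A * t))) / A := by ring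
      _ = 1 / A := by
          rw [mul_inv_cancel₀ (pow_pos hχt n).ne', ← Real.exp_add]
          simp
  -- outer bound via norm_integral_le_of_norm_le_const
  have habs : ∀ t ∈ Set.uIoc (0:ℝ) r,
      ‖χ t ^ n * (∫ s in t..r, (χ s ^ n)⁻¹)‖ ≤ 1 / A := by
    intro t ht
    rw [Set.uIoc_of_le hr.le] at ht
    have hnn : 0 ≤ χ t ^ n * (∫ s in t..r, (χ s ^ n)⁻¹) := by
      apply mul_nonneg (pow_nonneg (hχpos t ht.1).le n)
      apply intervalIntegral.integral_nonneg ht.2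
      intro s hs
      exact inv_nonneg.2 (pow_nonneg (hχpos s (lt_of_lt_of_le ht.1 hs.1)).le n)
    rw [Real.norm_eq_abs, abs_of_nonneg hnn]
    exact key t ht
  have hfinal := intervalIntegral.norm_integral_le_of_norm_le_const habs
  -- rewrite the original integral in terms of χ and n
  have heq : (∫ t in (0:ℝ)..r,
        (Real.sinh (A * t) / A) ^ (2 * (m:ℤ) - 1) *
          (∫ s in t..r, (Real.sinh (A * s) / A) ^ (1 - 2 * (m:ℤ))))
      = ∫ t in (0:ℝ)..r, χ t ^ n * (∫ s in t..r, (χ s ^ n)⁻¹) := by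
    apply intervalIntegral.integral_congr
    intro t _
    simp only [hz, hz', zpow_natCast, zpow_neg, hχ]
  rw [heq]
  calc (∫ t in (0:ℝ)..r, χ t ^ n * (∫ s in t..r, (χ s ^ n)⁻¹))
      ≤ ‖∫ t in (0:ℝ)..r, χ t ^ n * (∫ s in t..r, (χ s ^ n)⁻¹)‖ := le_abs_self _
    _ ≤ 1 / A * |r - 0| := hfinal
    _ = 1 / A * r := by rw [sub_zero, abs_of_pos hr]
end

section
/- Let κ ≤ 0 and define χ(s,t) = t if s = 0 and χ(s,t) = sinh(st)/s otherwise. Let m ≥ 1 and δ > 0. Define K(r,δ) = r^{1−2m}·(∫_{1/3}^r G(t)^{1−2m} dt)^{(1+δ)²} / G(r)^{(1−2m)(1+δ)}, where G satisfies t ≤ G(t) ≤ χ(√(−κ), t) for t > 0. If κ = 0 (so G(t) = t is forced in the bounds, i.e., t ≤ G(t) ≤ t), then log⁺ K(r,δ) ≤ (2m−1)δ·log r + (1+δ)²·log⁺log r + O(1) for r > 1. -/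
/-- `χ(s,t) = t` if `s = 0`, and `sinh(st)/s` otherwise. -/
noncomputable def chi (s t : ℝ) : ℝ := if s = 0 then t else Real.sinh (s * t) / s

/-- `log⁺ x = max (log x) 0`. -/
noncomputable def posLog (x : ℝ) : ℝ := max (Real.log x) 0

/-!
For `κ = 0` the two-sided bound forces `G t = t`, so that
`K r = r ^ ((2m-1)δ) * (∫ t in 1/3..r, t ^ (1-2m)) ^ (1+δ)^2`.
As `1 - 2m ≤ -1`, the integrand is at most `3 ^ (2m-2) / t` on `[1/3, r]`, so the integral is
`O(log r)`; subadditivity of `log⁺` on products and sums then gives the estimate.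
-/

open Real hiding posLog

lemma posLog_eq_real_posLog (x : ℝ) : posLog x = log⁺ x := max_comm _ _

lemma Real.posLog_rpow {x b : ℝ} (hx : 0 ≤ x) (hb : 0 ≤ b) : log⁺ (x ^ b) = b * log⁺ x := by
  rcases hx.eq_or_lt with rfl | hx
  · rcases hb.eq_or_lt with rfl | hb
    · simp
    · simp [zero_rpow hb.ne']
  rw [posLog_apply, posLog_apply, log_rpow hx, mul_max_of_nonneg _ _ hb, mul_zero]

lemma integral_rpow_le_rpow_mul_log {a x r : ℝ} (ha : a ≤ -1) (hx : 0 < x) (hxr : x ≤ r) :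
    ∫ t in x..r, t ^ a ≤ x ^ (a + 1) * log (r / x) := by
  have hpos : ∀ t ∈ Set.uIcc x r, 0 < t := fun t ht =>
    hx.trans_le (Set.uIcc_of_le hxr ▸ ht).1
  calc ∫ t in x..r, t ^ a
      ≤ ∫ t in x..r, x ^ (a + 1) * t⁻¹ := by
        refine intervalIntegral.integral_mono_on hxr
          (intervalIntegral.intervalIntegrable_rpow (Or.inr fun h => (hpos 0 h).false))
          ((intervalIntegral.intervalIntegrable_inv (fun t ht => (hpos t ht).ne')
            continuousOn_id).const_mul _) fun t ht => ?_
        have ht0 : 0 < t := hx.trans_le ht.1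
        calc t ^ a = t ^ (a + 1) * t⁻¹ := by
              rw [← rpow_neg_one, ← rpow_add ht0, add_neg_cancel_right]
          _ ≤ x ^ (a + 1) * t⁻¹ := by
              have : t ^ (a + 1) ≤ x ^ (a + 1) := rpow_le_rpow_of_nonpos hx ht.1 (by linarith)
              gcongr
    _ = x ^ (a + 1) * log (r / x) := by
        rw [intervalIntegral.integral_const_mul, integral_inv fun h => (hpos 0 h).false]

lemma integral_rpow_nonneg {a x r : ℝ} (hx : 0 ≤ x) (hxr : x ≤ r) : 0 ≤ ∫ t in x..r, t ^ a :=
  intervalIntegral.integral_nonneg hxr fun _ ht => rpow_nonneg (hx.trans ht.1) a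

lemma posLog_integral_rpow_le {a x r : ℝ} (ha : a ≤ -1) (hx : 0 < x) (hxr : x ≤ r) :
    log⁺ (∫ t in x..r, t ^ a) ≤ log⁺ (x ^ (a + 1)) + log 2 + log⁺ (-log x) + log⁺ (log r) := by
  calc log⁺ (∫ t in x..r, t ^ a)
      ≤ log⁺ (x ^ (a + 1) * log (r / x)) :=
        posLog_le_posLog (integral_rpow_nonneg hx.le hxr) (integral_rpow_le_rpow_mul_log ha hx hxr)
    _ ≤ log⁺ (x ^ (a + 1)) + log⁺ (log r + -log x) := by
        rw [log_div (hx.trans_le hxr).ne' hx.ne', sub_eq_add_neg]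
        exact posLog_mul
    _ ≤ log⁺ (x ^ (a + 1)) + (log 2 + log⁺ (log r) + log⁺ (-log x)) := by
        gcongr; exact posLog_add
    _ = _ := by ring

theorem K_estimate_flat_case_general
    (κ : ℝ) (m : ℕ) (hm : 1 ≤ m) (δ : ℝ) (hδ : 0 < δ)
    (G : ℝ → ℝ)
    (hG : ∀ t > (0:ℝ), t ≤ G t ∧ G t ≤ chi (Real.sqrt (-κ)) t)
    (K : ℝ → ℝ)
    (hK : ∀ r > (1:ℝ), K r =
      r ^ ((1:ℝ) - 2 * m) *
        (∫ t in (1/3:ℝ)..r, G t ^ ((1:ℝ) - 2 * m)) ^ ((1 + δ) ^ 2) /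
          G r ^ (((1:ℝ) - 2 * m) * (1 + δ)))
    (hκ0 : κ = 0) :
    ∃ C : ℝ, ∀ r > (1:ℝ),
      posLog (K r) ≤ (2 * (m:ℝ) - 1) * δ * Real.log r +
        (1 + δ) ^ 2 * posLog (Real.log r) + C := by
  have hG_id : ∀ t > 0, G t = t := fun t ht =>
    le_antisymm (by simpa [chi, hκ0] using (hG t ht).2) (hG t ht).1
  have ha : (1:ℝ) - 2 * m ≤ -1 := by
    have : (1:ℝ) ≤ m := by exact_mod_cast hm
    linarith
  refine ⟨(1 + δ) ^ 2 * (log⁺ ((1 / 3) ^ (1 - 2 * m + 1 : ℝ)) + log 2 + log⁺ (-log (1 / 3))),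
    fun r hr => ?_⟩
  have hr0 : 0 < r := one_pos.trans hr
  have he : 0 ≤ (2 * (m:ℝ) - 1) * δ := mul_nonneg (by linarith) hδ.le
  set I := ∫ t in (1/3:ℝ)..r, t ^ ((1:ℝ) - 2 * m)
  have h13 : (1 / 3 : ℝ) ≤ r := by linarith
  have hK_eq : K r = r ^ ((2 * m - 1) * δ) * I ^ (1 + δ) ^ 2 := by
    have hI : ∫ t in (1/3:ℝ)..r, G t ^ ((1:ℝ) - 2 * m) = I :=
      intervalIntegral.integral_congr fun t ht => by
        rw [hG_id t (lt_of_lt_of_le (by norm_num) (Set.uIcc_of_le h13 ▸ ht).1)]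
    rw [hK r hr, hI, hG_id r hr0, mul_div_right_comm, ← rpow_sub hr0]
    ring_nf
  have hI := posLog_integral_rpow_le ha (by norm_num : (0:ℝ) < 1 / 3) h13
  rw [posLog_eq_real_posLog, posLog_eq_real_posLog, hK_eq]
  calc log⁺ (r ^ ((2 * m - 1) * δ) * I ^ (1 + δ) ^ 2)
      ≤ log⁺ (r ^ ((2 * m - 1) * δ)) + log⁺ (I ^ (1 + δ) ^ 2) := posLog_mul
    _ = (2 * m - 1) * δ * log r + (1 + δ) ^ 2 * log⁺ I := by
        rw [posLog_rpow hr0.le he, posLog_eq_log (by rw [abs_of_pos hr0]; exact hr.le),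
          posLog_rpow (integral_rpow_nonneg (by norm_num) h13) (by positivity)]
    _ ≤ _ := by nlinarith [mul_le_mul_of_nonneg_left hI (sq_nonneg (1 + δ))]

/-- Estimate of the error factor `K(r,δ)` in the calculus lemma, in the case `κ = 0`:
`log⁺ K(r,δ) ≤ (2m−1)δ log r + (1+δ)² log⁺ log r + O(1)` for `r > 1`. -/
theorem K_estimate_flat_case
    (κ : ℝ) (hκ : κ ≤ 0) (m : ℕ) (hm : 1 ≤ m) (δ : ℝ) (hδ : 0 < δ)
    (G : ℝ → ℝ)
    (hG : ∀ t > (0:ℝ), t ≤ G t ∧ G t ≤ chi (Real.sqrt (-κ)) t)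
    (K : ℝ → ℝ)
    (hK : ∀ r > (1:ℝ), K r =
      r ^ ((1:ℝ) - 2 * m) *
        (∫ t in (1/3:ℝ)..r, G t ^ ((1:ℝ) - 2 * m)) ^ ((1 + δ) ^ 2) /
          G r ^ (((1:ℝ) - 2 * m) * (1 + δ)))
    (hκ0 : κ = 0) :
    ∃ C : ℝ, ∀ r > (1:ℝ),
      posLog (K r) ≤ (2 * (m:ℝ) - 1) * δ * Real.log r +
        (1 + δ) ^ 2 * posLog (Real.log r) + C :=
  K_estimate_flat_case_general κ m hm δ hδ G hG K hK hκ0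
end
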